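/- Let n and m be positive even integers, μ ∈ {1,…,n/2}, ρ ∈ {1,…,m/2}. Let φ = (φ₁,…,φ_{n/2}) be a Boolean permutation of 𝔽₂^{n/2} and ψ = (ψ₁,…,ψ_{m/2}) a Boolean permutation of 𝔽₂^{m/2}. Let E₁, E₂ be linear subspaces of 𝔽₂^{n/2} with φ(E₂) = E₁^⊥, and Ξ₁, Ξ₂ linear subspaces of 𝔽₂^{m/2} with ψ(Ξ₂) = Ξ₁^⊥. Define f : 𝔽₂ⁿ → 𝔽₂ by f(x) = ⨁_{i=1}^{n/2} φ_i(x_{n/2+1},…,x_n)·x_i ⊕ 1_{E₁}(x₁,…,x_{n/2})·1_{E₂}(x_{n/2+1},…,x_n), and g : 𝔽₂^m → 𝔽₂ by g(y) = ⨁_{j=1}^{m/2} ψ_j(y_{m/2+1},…,y_m)·y_j ⊕ 1_{Ξ₁}(y₁,…,y_{m/2})·1_{Ξ₂}(y_{m/2+1},…,y_m). Let f₀, f₁ be the restrictions of f at coordinate μ and g₀, g₁ the restrictions of g at coordinate ρ. Then h : 𝔽₂^{n−1} × 𝔽₂^{m−1} → 𝔽₂ defined by h(x,y) = f₀(x) ⊕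 g₀(y) ⊕ (f₀(x)⊕f₁(x))·(g₀(y)⊕g₁(y)) is a bent function in n+m−2 variables. -/
import Mathlib


open Finset

/-- The sign `(-1)^b` for `b ∈ 𝔽₂`. -/
def chi (b : ZMod 2) : ℤ := if b = 0 then 1 else -1

/-- The Walsh transform of a Boolean function in `n` variables. -/
def walsh {n : ℕ} (f : (Fin n → ZMod 2) → ZMod 2) (ω : Fin n → ZMod 2) : ℤ :=
  ∑ x : Fin n → ZMod 2, chi (f x + ∑ i, ω i * x i)

/-- The Walsh transform of a Boolean function given on a product `𝔽₂ⁿ × 𝔽₂^m`. -/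
def walsh2 {n m : ℕ} (f : (Fin n → ZMod 2) → (Fin m → ZMod 2) → ZMod 2)
    (α : Fin n → ZMod 2) (β : Fin m → ZMod 2) : ℤ :=
  ∑ x : Fin n → ZMod 2, ∑ y : Fin m → ZMod 2,
    chi (f x y + (∑ i, α i * x i) + (∑ j, β j * y j))

/-- A Boolean function in `n` variables is bent if its Walsh transform only
takes the values `±2^(n/2)`. -/
def IsBent (n : ℕ) (f : (Fin n → ZMod 2) → ZMod 2) : Prop :=
  ∀ a, walsh f a = 2 ^ (n / 2) ∨ walsh f a = -(2 ^ (n / 2))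

/-- Bentness for a function given on a product, i.e. as a function in `n + m` variables. -/
def IsBent2 (n m : ℕ) (f : (Fin n → ZMod 2) → (Fin m → ZMod 2) → ZMod 2) : Prop :=
  ∀ α β, walsh2 f α β = 2 ^ ((n + m) / 2) ∨ walsh2 f α β = -(2 ^ ((n + m) / 2))

/-- `fd` is the dual of a bent function `f`:  `W_f(ω) = 2^(n/2) (−1)^{fd(ω)}`. -/
def IsDual {n : ℕ} (f fd : (Fin n → ZMod 2) → ZMod 2) : Prop :=
  ∀ ω, walsh f ω = 2 ^ (n / 2) * chi (fd ω)

/-- The dual for a bent function given on a product (a function of `n + m` variables). -/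
def IsDual2 {n m : ℕ} (f fd : (Fin n → ZMod 2) → (Fin m → ZMod 2) → ZMod 2) : Prop :=
  ∀ α β, walsh2 f α β = 2 ^ ((n + m) / 2) * chi (fd α β)

/-- Insert the bit `b` at position `μ`, giving a vector of length `n` from one of length `n-1`. -/
def insertAt {n : ℕ} (μ : Fin n) (b : ZMod 2) (x : Fin (n - 1) → ZMod 2) : Fin n → ZMod 2 :=
  fun i =>
    if h : (i : ℕ) < (μ : ℕ) then x ⟨i, by have := μ.isLt; omega⟩
    else if h' : (μ : ℕ) < (i : ℕ) then x ⟨(i : ℕ) - 1, by have := i.isLt; omega⟩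
    else b

/-- Hamming weight of a vector in `𝔽₂ⁿ`. -/
def wt {n : ℕ} (ω : Fin n → ZMod 2) : ℕ := (Finset.univ.filter fun i => ω i ≠ 0).card

/-- `t`-resiliency (with `t : ℤ`, so that the convention that every function is
`(-1)`-resilient holds). -/
def Resilient {n : ℕ} (t : ℤ) (f : (Fin n → ZMod 2) → ZMod 2) : Prop :=
  ∀ ω, (wt ω : ℤ) ≤ t → walsh f ω = 0

/-- `t`-resiliency for a function given on a product `𝔽₂ⁿ × 𝔽₂^m`. -/
def Resilient2 {n m : ℕ} (t : ℤ) (f : (Fin n → ZMod 2) → (Fin m → ZMod 2) → ZMod 2) : Prop :=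
  ∀ α β, (wt α + wt β : ℤ) ≤ t → walsh2 f α β = 0

/-! ### Auxiliary lemmas -/

open scoped Classical

lemma chi_add (a b : ZMod 2) : chi (a + b) = chi a * chi b := by
  revert a b; decide

lemma chi_cases (b : ZMod 2) : chi b = 1 ∨ chi b = -1 := by revert b; decide

lemma chi_sum {ι : Type*} (s : Finset ι) (f : ι → ZMod 2) :
    chi (∑ i ∈ s, f i) = ∏ i ∈ s, chi (f i) := by
  induction s using Finset.cons_induction with
  | empty => simp [chi]
  | cons a s ha ih => rw [Finset.sum_cons, Finset.prod_cons, chi_add, ih]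

lemma sum_chi_single (z : ZMod 2) : (∑ b : ZMod 2, chi (z * b)) = if z = 0 then 2 else 0 := by
  revert z; decide

lemma sum_chi_dot {n : ℕ} (c : Fin n → ZMod 2) :
    ∑ x : Fin n → ZMod 2, chi (∑ i, c i * x i) = if c = 0 then 2 ^ n else 0 := by
  have h1 : ∀ x : Fin n → ZMod 2, chi (∑ i, c i * x i) = ∏ i, chi (c i * x i) := fun x =>
    chi_sum _ _
  simp_rw [h1]
  rw [← Fintype.prod_sum (fun i b => chi (c i * b))]
  simp_rw [sum_chi_single]
  by_cases hc : c = 0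
  · simp [hc]
  · rw [if_neg hc]
    obtain ⟨i, hi⟩ : ∃ i, c i ≠ 0 := by
      by_contra hcon; push_neg at hcon; exact hc (funext hcon)
    exact Finset.prod_eq_zero (Finset.mem_univ i) (by simp [hi])

lemma sum_chi_dot_sub {n : ℕ} (E : Submodule (ZMod 2) (Fin n → ZMod 2)) (c : Fin n → ZMod 2) :
    ∑ x ∈ univ.filter (· ∈ E), chi (∑ i, c i * x i) =
      if (∀ e ∈ E, ∑ i, c i * e i = 0) then ((univ.filter (· ∈ E)).card : ℤ) else 0 := by
  by_cases hP : ∀ e ∈ E, ∑ i, c i * e i = 0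
  · rw [if_pos hP]
    rw [Finset.sum_congr rfl (fun x hx => by
      rw [hP x (by simpa using hx)])]
    simp [chi]
  · rw [if_neg hP]
    push_neg at hP
    obtain ⟨e, heE, he⟩ := hP
    have he1 : chi (∑ i, c i * e i) = -1 := by
      unfold chi; rw [if_neg he]
    have hcancel : ∀ u v : ZMod 2, u + v + v = u := by decide
    have key : ∑ x ∈ univ.filter (· ∈ E), chi (∑ i, c i * x i) =
        ∑ x ∈ univ.filter (· ∈ E), chi (∑ i, c i * (x + e) i) := by
      apply Finset.sum_nbij' (i := fun x => x + e) (j := fun x => x + e)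
      · intro a ha; simp only [mem_filter, mem_univ, true_and] at ha ⊢
        exact E.add_mem ha heE
      · intro a ha; simp only [mem_filter, mem_univ, true_and] at ha ⊢
        exact E.add_mem ha heE
      · intro a _; funext i; simp only [Pi.add_apply]; exact hcancel _ _
      · intro a _; funext i; simp only [Pi.add_apply]; exact hcancel _ _
      · intro a _
        have hae : a + e + e = a := by funext i; exact hcancel _ _
        rw [hae]
    have key2 : ∀ x : Fin n → ZMod 2, chi (∑ i, c i * (x + e) i) = - chi (∑ i, c i * x i) := by
      intro x
      have : (∑ i, c i * (x + e) i) = (∑ i, c i * x i) + (∑ i, c i * e i) := by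
        rw [← Finset.sum_add_distrib]
        exact Finset.sum_congr rfl fun i _ => by simp [mul_add]
      rw [this, chi_add, he1]; ring
    simp_rw [key2, Finset.sum_neg_distrib] at key
    linarith

lemma card_mul_card_perp {n : ℕ} (E : Submodule (ZMod 2) (Fin n → ZMod 2)) :
    ((univ.filter (· ∈ E)).card : ℤ) *
      ((univ.filter fun c : Fin n → ZMod 2 => ∀ e ∈ E, ∑ i, c i * e i = 0).card : ℤ) = 2 ^ n := by
  have swap : ∑ c : Fin n → ZMod 2, ∑ x ∈ univ.filter (· ∈ E), chi (∑ i, c i * x i)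
      = ∑ x ∈ univ.filter (· ∈ E), ∑ c : Fin n → ZMod 2, chi (∑ i, c i * x i) :=
    Finset.sum_comm
  have lhs : ∑ c : Fin n → ZMod 2, ∑ x ∈ univ.filter (· ∈ E), chi (∑ i, c i * x i)
      = ((univ.filter (· ∈ E)).card : ℤ) *
        ((univ.filter fun c : Fin n → ZMod 2 => ∀ e ∈ E, ∑ i, c i * e i = 0).card : ℤ) := by
    simp_rw [sum_chi_dot_sub E]
    rw [← Finset.sum_filter, Finset.sum_const, nsmul_eq_mul]
    ring
  have rhs : ∑ x ∈ univ.filter (· ∈ E), ∑ c : Fin n → ZMod 2, chi (∑ i, c i * x i)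
      = 2 ^ n := by
    have inner : ∀ x : Fin n → ZMod 2,
        (∑ c : Fin n → ZMod 2, chi (∑ i, c i * x i)) = if x = 0 then 2 ^ n else 0 := by
      intro x
      rw [← sum_chi_dot x]
      exact Finset.sum_congr rfl fun c _ => by
        congr 1; exact Finset.sum_congr rfl fun i _ => mul_comm _ _
    simp_rw [inner]
    rw [Finset.sum_ite_eq' (univ.filter (· ∈ E)) 0 (fun _ => (2:ℤ) ^ n)]
    simp [E.zero_mem]
  rw [lhs, rhs] at swap
  exact swap

lemma sum_chi_dot_ind {n : ℕ} (E : Submodule (ZMod 2) (Fin n → ZMod 2))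
    (c : Fin n → ZMod 2) (ε : ZMod 2) :
    ∑ u : Fin n → ZMod 2, chi ((∑ i, c i * u i) + ε * (if u ∈ E then 1 else 0)) =
      (if c = 0 then 2 ^ n else 0) +
        (chi ε - 1) *
          (if (∀ e ∈ E, ∑ i, c i * e i = 0) then ((univ.filter (· ∈ E)).card : ℤ) else 0) := by
  have hterm : ∀ u : Fin n → ZMod 2,
      chi ((∑ i, c i * u i) + ε * (if u ∈ E then 1 else 0)) =
        chi (∑ i, c i * u i) + (chi ε - 1) * (if u ∈ E then chi (∑ i, c i * u i) else 0) := by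
    intro u
    by_cases hu : u ∈ E
    · rw [if_pos hu, if_pos hu, mul_one, chi_add]; ring
    · rw [if_neg hu, if_neg hu, mul_zero, add_zero]; ring
  simp_rw [hterm]
  rw [Finset.sum_add_distrib, ← Finset.mul_sum, sum_chi_dot]
  congr 1
  rw [← Finset.sum_filter, sum_chi_dot_sub]

lemma classD_bent2 {s : ℕ} (φ : Fin s → (Fin s → ZMod 2) → ZMod 2)
    (E₁ E₂ : Submodule (ZMod 2) (Fin s → ZMod 2))
    (hφ : Function.Bijective fun w : Fin s → ZMod 2 => fun i => φ i w)
    (hφE : (fun w => fun i => φ i w) '' (E₂ : Set (Fin s → ZMod 2)) =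
      {z : Fin s → ZMod 2 | ∀ e ∈ E₁, (∑ i, z i * e i) = 0})
    (a b : Fin s → ZMod 2) :
    walsh2 (fun u v => (∑ i, φ i v * u i) +
        (if u ∈ E₁ then 1 else 0) * (if v ∈ E₂ then 1 else 0)) a b = 2 ^ s ∨
    walsh2 (fun u v => (∑ i, φ i v * u i) +
        (if u ∈ E₁ then 1 else 0) * (if v ∈ E₂ then 1 else 0)) a b = -(2 ^ s) := by
  have hz2 : ∀ x : ZMod 2, x + x = 0 := by decide
  have hz2' : ∀ x y : ZMod 2, x + y = 0 → x = y := by decide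
  obtain ⟨v₀, hv₀⟩ := hφ.surjective a
  set Φ := fun w : Fin s → ZMod 2 => fun i => φ i w with hΦ
  have hmerge : ∀ u v : Fin s → ZMod 2,
      (∑ i, φ i v * u i) + (∑ i, a i * u i) = ∑ i, (φ i v + a i) * u i := by
    intro u v
    rw [← Finset.sum_add_distrib]
    exact Finset.sum_congr rfl fun i _ => (add_mul _ _ _).symm
  have hterm : ∀ u v : Fin s → ZMod 2,
      chi (((∑ i, φ i v * u i) + (if u ∈ E₁ then 1 else 0) * (if v ∈ E₂ then 1 else 0)) +
          (∑ i, a i * u i) + (∑ j, b j * v j)) =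
        chi (∑ j, b j * v j) *
          chi ((∑ i, (φ i v + a i) * u i) + (if v ∈ E₂ then 1 else 0) * (if u ∈ E₁ then 1 else 0)) := by
    intro u v
    rw [← chi_add]
    congr 1
    rw [← hmerge]
    ring
  have hW : walsh2 (fun u v => (∑ i, φ i v * u i) +
        (if u ∈ E₁ then 1 else 0) * (if v ∈ E₂ then 1 else 0)) a b =
      ∑ v : Fin s → ZMod 2, chi (∑ j, b j * v j) *
        ((if (fun i => φ i v + a i) = 0 then (2:ℤ) ^ s else 0) +
          (chi (if v ∈ E₂ then 1 else 0) - 1) *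
            (if (∀ e ∈ E₁, ∑ i, (φ i v + a i) * e i = 0)
              then ((univ.filter (· ∈ E₁)).card : ℤ) else 0)) := by
    rw [walsh2, Finset.sum_comm]
    refine Finset.sum_congr rfl fun v _ => ?_
    rw [Finset.sum_congr rfl fun u _ => hterm u v, ← Finset.mul_sum,
      sum_chi_dot_ind E₁ (fun i => φ i v + a i) (if v ∈ E₂ then 1 else 0)]
  rw [hW]
  have hsplit : ∀ v : Fin s → ZMod 2, chi (∑ j, b j * v j) *
        ((if (fun i => φ i v + a i) = 0 then (2:ℤ) ^ s else 0) +
          (chi (if v ∈ E₂ then 1 else 0) - 1) *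
            (if (∀ e ∈ E₁, ∑ i, (φ i v + a i) * e i = 0)
              then ((univ.filter (· ∈ E₁)).card : ℤ) else 0)) =
      chi (∑ j, b j * v j) * (if (fun i => φ i v + a i) = 0 then (2:ℤ) ^ s else 0) +
      chi (∑ j, b j * v j) * ((chi (if v ∈ E₂ then 1 else 0) - 1) *
            (if (∀ e ∈ E₁, ∑ i, (φ i v + a i) * e i = 0)
              then ((univ.filter (· ∈ E₁)).card : ℤ) else 0)) := fun v => by ring
  simp_rw [hsplit]
  rw [Finset.sum_add_distrib]
  have hpart1 : ∑ v : Fin s → ZMod 2, chi (∑ j, b j * v j) *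
      (if (fun i => φ i v + a i) = 0 then (2:ℤ) ^ s else 0) =
      chi (∑ j, b j * v₀ j) * 2 ^ s := by
    rw [Finset.sum_eq_single v₀]
    · rw [if_pos]
      funext i
      have : φ i v₀ = a i := congrFun hv₀ i
      rw [this]; exact hz2 _
    · intro v _ hv
      rw [if_neg, mul_zero]
      intro hcon
      apply hv
      apply hφ.injective
      rw [hv₀]
      funext i
      exact (hz2' _ _ (congrFun hcon i))
    · intro hcon; exact absurd (Finset.mem_univ v₀) hcon
  rw [hpart1]
  have hmemperp : ∀ v, v ∈ E₂ → ∀ e ∈ E₁, (∑ i, φ i v * e i) = 0 := by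
    intro v hv
    have : Φ v ∈ {z : Fin s → ZMod 2 | ∀ e ∈ E₁, (∑ i, z i * e i) = 0} := by
      rw [← hφE]; exact Set.mem_image_of_mem _ hv
    exact this
  have hcond : ∀ v, v ∈ E₂ →
      ((∀ e ∈ E₁, ∑ i, (φ i v + a i) * e i = 0) ↔ (∀ e ∈ E₁, ∑ i, a i * e i = 0)) := by
    intro v hv
    have key : ∀ e : Fin s → ZMod 2,
        (∑ i, (φ i v + a i) * e i) = (∑ i, φ i v * e i) + ∑ i, a i * e i := by
      intro e
      rw [← Finset.sum_add_distrib]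
      exact Finset.sum_congr rfl fun i _ => add_mul _ _ _
    constructor
    · intro h e he
      have := h e he
      rw [key, hmemperp v hv e he, zero_add] at this
      exact this
    · intro h e he
      rw [key, hmemperp v hv e he, zero_add]
      exact h e he
  by_cases hPa : ∀ e ∈ E₁, ∑ i, a i * e i = 0
  · have hpart2 : ∑ v : Fin s → ZMod 2, chi (∑ j, b j * v j) *
        ((chi (if v ∈ E₂ then 1 else 0) - 1) *
            (if (∀ e ∈ E₁, ∑ i, (φ i v + a i) * e i = 0)
              then ((univ.filter (· ∈ E₁)).card : ℤ) else 0)) =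
        (-2 * ((univ.filter (· ∈ E₁)).card : ℤ)) *
          (if (∀ e ∈ E₂, ∑ i, b i * e i = 0) then ((univ.filter (· ∈ E₂)).card : ℤ) else 0) := by
      have : ∀ v : Fin s → ZMod 2, chi (∑ j, b j * v j) *
        ((chi (if v ∈ E₂ then 1 else 0) - 1) *
            (if (∀ e ∈ E₁, ∑ i, (φ i v + a i) * e i = 0)
              then ((univ.filter (· ∈ E₁)).card : ℤ) else 0)) =
          if v ∈ E₂ then (-2 * ((univ.filter (· ∈ E₁)).card : ℤ)) * chi (∑ j, b j * v j)
          else 0 := by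
        intro v
        by_cases hv : v ∈ E₂
        · rw [if_pos hv, if_pos hv, if_pos ((hcond v hv).mpr hPa)]
          show chi _ * ((chi 1 - 1) * _) = _
          have : chi 1 = -1 := rfl
          rw [this]; ring
        · rw [if_neg hv, if_neg hv]
          show chi _ * ((chi 0 - 1) * _) = 0
          have : chi 0 = 1 := rfl
          rw [this]; ring
      simp_rw [this]
      rw [← Finset.sum_filter, ← Finset.mul_sum, sum_chi_dot_sub E₂ b]
    rw [hpart2]
    by_cases hPb : ∀ e ∈ E₂, ∑ i, b i * e i = 0
    · rw [if_pos hPb]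
      have hv₀E₂ : v₀ ∈ E₂ := by
        have ha : a ∈ {z : Fin s → ZMod 2 | ∀ e ∈ E₁, (∑ i, z i * e i) = 0} := hPa
        rw [← hφE] at ha
        obtain ⟨w, hw, hwa⟩ := ha
        have : w = v₀ := hφ.injective (by rw [hv₀]; exact hwa)
        rwa [← this]
      have hbv₀ : chi (∑ j, b j * v₀ j) = 1 := by
        rw [hPb v₀ hv₀E₂]; rfl
      have hcard : ((univ.filter (· ∈ E₂)).card : ℤ) =
          ((univ.filter fun c : Fin s → ZMod 2 => ∀ e ∈ E₁, ∑ i, c i * e i = 0).card : ℤ) := by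
        congr 1
        apply Finset.card_bij (i := fun w _ => Φ w)
        · intro w hw
          simp only [mem_filter, mem_univ, true_and] at hw ⊢
          have : Φ w ∈ {z : Fin s → ZMod 2 | ∀ e ∈ E₁, (∑ i, z i * e i) = 0} := by
            rw [← hφE]; exact Set.mem_image_of_mem _ hw
          exact this
        · intro w₁ h₁ w₂ h₂ heq
          exact hφ.injective heq
        · intro z hz
          simp only [mem_filter, mem_univ, true_and] at hz
          have : z ∈ {z : Fin s → ZMod 2 | ∀ e ∈ E₁, (∑ i, z i * e i) = 0} := hz
          rw [← hφE] at this
          obtain ⟨w, hw, hwz⟩ := this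
          exact ⟨w, by simp only [mem_filter, mem_univ, true_and]; exact hw, hwz⟩
      have hcards := card_mul_card_perp E₁
      rw [hbv₀, hcard]
      right
      nlinarith [hcards]
    · rw [if_neg hPb, mul_zero, add_zero]
      rcases chi_cases (∑ j, b j * v₀ j) with h | h <;> rw [h] <;> [left; right] <;> ring
  · have hpart2 : ∑ v : Fin s → ZMod 2, chi (∑ j, b j * v j) *
        ((chi (if v ∈ E₂ then 1 else 0) - 1) *
            (if (∀ e ∈ E₁, ∑ i, (φ i v + a i) * e i = 0)
              then ((univ.filter (· ∈ E₁)).card : ℤ) else 0)) = 0 := by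
      apply Finset.sum_eq_zero
      intro v _
      by_cases hv : v ∈ E₂
      · rw [if_pos hv, if_neg (fun hcon => hPa ((hcond v hv).mp hcon))]
        ring
      · rw [if_neg hv]
        show chi _ * ((chi 0 - 1) * _) = 0
        have : chi 0 = 1 := rfl
        rw [this]; ring
    rw [hpart2, add_zero]
    rcases chi_cases (∑ j, b j * v₀ j) with h | h <;> rw [h] <;> [left; right] <;> ring

/-! ### Splitting `𝔽₂^{2s}` as a product -/

def join {s : ℕ} (u v : Fin s → ZMod 2) : Fin (2*s) → ZMod 2 :=
  fun i => if h : (i:ℕ) < s then u ⟨i, h⟩ else v ⟨(i:ℕ) - s, by have := i.isLt; omega⟩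

lemma join_left {s : ℕ} (u v : Fin s → ZMod 2) (q : Fin s) (hq : (q:ℕ) < 2*s) :
    join u v ⟨(q:ℕ), hq⟩ = u q := by
  show dite _ _ _ = _
  rw [dif_pos (show ((⟨(q:ℕ), hq⟩ : Fin (2*s)) : ℕ) < s from q.isLt)]

lemma join_right {s : ℕ} (u v : Fin s → ZMod 2) (q : Fin s) (hq : s + (q:ℕ) < 2*s) :
    join u v ⟨s + (q:ℕ), hq⟩ = v q := by
  show dite _ _ _ = _
  rw [dif_neg (show ¬ ((⟨s + (q:ℕ), hq⟩ : Fin (2*s)) : ℕ) < s by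
    show ¬ s + (q:ℕ) < s; omega)]
  congr 1
  apply Fin.ext
  show s + (q:ℕ) - s = (q:ℕ)
  omega

def joinEquiv (s : ℕ) : ((Fin s → ZMod 2) × (Fin s → ZMod 2)) ≃ (Fin (2*s) → ZMod 2) where
  toFun p := join p.1 p.2
  invFun X := (fun q => X ⟨(q:ℕ), by have := q.isLt; omega⟩,
               fun q => X ⟨s + (q:ℕ), by have := q.isLt; omega⟩)
  left_inv p := by
    refine Prod.ext ?_ ?_ <;> funext q
    · exact join_left p.1 p.2 q _
    · exact join_right p.1 p.2 q _
  right_inv X := by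
    funext i
    show dite _ _ _ = X i
    by_cases h : (i:ℕ) < s
    · rw [dif_pos h]
    · rw [dif_neg h]
      have hlt := i.isLt
      exact congrArg X (Fin.ext (show s + ((i:ℕ) - s) = (i:ℕ) by omega))

lemma sum_split {M : Type*} [AddCommMonoid M] {s : ℕ} (F : Fin (2*s) → M) :
    ∑ i, F i = (∑ q : Fin s, F ⟨(q:ℕ), by have := q.isLt; omega⟩) +
      ∑ q : Fin s, F ⟨s + (q:ℕ), by have := q.isLt; omega⟩ := by
  have h2 : s + s = 2*s := (two_mul s).symm
  have step : ∑ i, F i = ∑ j : Fin (s+s), F (Fin.cast h2 j) :=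
    (Fintype.sum_equiv (finCongr h2) _ F (fun j => rfl)).symm
  rw [step, Fin.sum_univ_add]
  exact congrArg₂ (· + ·)
    (Finset.sum_congr rfl fun q _ => congrArg F (Fin.ext rfl))
    (Finset.sum_congr rfl fun q _ => congrArg F (Fin.ext rfl))

/-! ### walsh of a class-D function -/

lemma classD_walsh {s : ℕ} (φ : Fin s → (Fin s → ZMod 2) → ZMod 2)
    (E₁ E₂ : Submodule (ZMod 2) (Fin s → ZMod 2))
    (hφ : Function.Bijective fun w : Fin s → ZMod 2 => fun i => φ i w)
    (hφE : (fun w => fun i => φ i w) '' (E₂ : Set (Fin s → ZMod 2)) =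
      {z : Fin s → ZMod 2 | ∀ e ∈ E₁, (∑ i, z i * e i) = 0})
    (f : (Fin (2 * s) → ZMod 2) → ZMod 2)
    (hf : ∀ X : Fin (2 * s) → ZMod 2,
      f X = (∑ i : Fin s,
              φ i (fun q => X ⟨s + (q : ℕ), by have := q.isLt; omega⟩) *
                X ⟨(i : ℕ), by have := i.isLt; omega⟩) +
            (if (fun q : Fin s => X ⟨(q : ℕ), by have := q.isLt; omega⟩) ∈ E₁
              then 1 else 0) *
            (if (fun q : Fin s => X ⟨s + (q : ℕ), by have := q.isLt; omega⟩) ∈ E₂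
              then 1 else 0)) :
    ∀ ω : Fin (2*s) → ZMod 2, walsh f ω = 2 ^ s ∨ walsh f ω = -(2 ^ s) := by
  intro ω
  have key : walsh f ω = walsh2 (fun u v => (∑ i, φ i v * u i) +
      (if u ∈ E₁ then 1 else 0) * (if v ∈ E₂ then 1 else 0))
      (fun q => ω ⟨(q:ℕ), by have := q.isLt; omega⟩)
      (fun q => ω ⟨s + (q:ℕ), by have := q.isLt; omega⟩) := by
    rw [walsh, walsh2, ← Equiv.sum_comp (joinEquiv s), Fintype.sum_prod_type]
    refine Finset.sum_congr rfl fun u _ => Finset.sum_congr rfl fun v _ => ?_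
    congr 1
    have hu : (fun q : Fin s => join u v ⟨(q:ℕ), by have := q.isLt; omega⟩) = u :=
      funext fun q => join_left u v q _
    have hv : (fun q : Fin s => join u v ⟨s + (q:ℕ), by have := q.isLt; omega⟩) = v :=
      funext fun q => join_right u v q _
    show f (join u v) + ∑ i, ω i * join u v i = _
    rw [hf (join u v)]
    rw [sum_split (fun i => ω i * join u v i)]
    simp only [hu, hv, join_left, join_right]
    ring
  rw [key]
  exact classD_bent2 φ E₁ E₂ hφ hφE _ _

/-! ### insertAt machinery -/

def extendIdx {n : ℕ} (μ : Fin n) (q : Fin (n-1)) : Fin n :=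
  if h : (q:ℕ) < (μ:ℕ) then ⟨q, by have := q.isLt; have := μ.isLt; omega⟩
  else ⟨(q:ℕ)+1, by have := q.isLt; omega⟩

lemma extendIdx_val {n : ℕ} (μ : Fin n) (q : Fin (n-1)) :
    ((extendIdx μ q) : ℕ) = if (q:ℕ) < (μ:ℕ) then (q:ℕ) else (q:ℕ)+1 := by
  unfold extendIdx
  split <;> simp_all

lemma insertAt_extendIdx {n : ℕ} (μ : Fin n) (b : ZMod 2) (x : Fin (n-1) → ZMod 2)
    (q : Fin (n-1)) : insertAt μ b x (extendIdx μ q) = x q := by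
  show dite _ _ _ = _
  by_cases h : (q:ℕ) < (μ:ℕ)
  · rw [dif_pos (show ((extendIdx μ q):ℕ) < (μ:ℕ) by rw [extendIdx_val, if_pos h]; exact h)]
    congr 1
    apply Fin.ext
    show ((extendIdx μ q):ℕ) = (q:ℕ)
    rw [extendIdx_val, if_pos h]
  · rw [dif_neg (show ¬ ((extendIdx μ q):ℕ) < (μ:ℕ) by rw [extendIdx_val, if_neg h]; omega),
      dif_pos (show (μ:ℕ) < ((extendIdx μ q):ℕ) by rw [extendIdx_val, if_neg h]; omega)]
    congr 1
    apply Fin.ext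
    show ((extendIdx μ q):ℕ) - 1 = (q:ℕ)
    rw [extendIdx_val, if_neg h]
    omega

lemma insertAt_self {n : ℕ} (μ : Fin n) (b : ZMod 2) (x : Fin (n-1) → ZMod 2) :
    insertAt μ b x μ = b := by
  show dite _ _ _ = _
  rw [dif_neg (lt_irrefl _), dif_neg (lt_irrefl _)]

def insertEquiv {n : ℕ} (μ : Fin n) : (ZMod 2 × (Fin (n-1) → ZMod 2)) ≃ (Fin n → ZMod 2) where
  toFun p := insertAt μ p.1 p.2
  invFun X := (X μ, fun q => X (extendIdx μ q))
  left_inv p := by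
    refine Prod.ext ?_ ?_
    · exact insertAt_self μ p.1 p.2
    · funext q; exact insertAt_extendIdx μ p.1 p.2 q
  right_inv X := by
    funext i
    show dite _ _ _ = X i
    by_cases h : (i:ℕ) < (μ:ℕ)
    · rw [dif_pos h]
      show X (extendIdx μ ⟨(i:ℕ), _⟩) = X i
      congr 1
      apply Fin.ext
      rw [extendIdx_val]
      show (if ((⟨(i:ℕ), _⟩ : Fin (n-1)):ℕ) < (μ:ℕ) then ((⟨(i:ℕ), _⟩ : Fin (n-1)):ℕ)
        else ((⟨(i:ℕ), _⟩ : Fin (n-1)):ℕ)+1) = (i:ℕ)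
      rw [if_pos (show (i:ℕ) < (μ:ℕ) from h)]
    · by_cases h' : (μ:ℕ) < (i:ℕ)
      · rw [dif_neg h, dif_pos h']
        show X (extendIdx μ ⟨(i:ℕ)-1, _⟩) = X i
        congr 1
        apply Fin.ext
        rw [extendIdx_val]
        show (if ((⟨(i:ℕ)-1, _⟩ : Fin (n-1)):ℕ) < (μ:ℕ) then ((⟨(i:ℕ)-1, _⟩ : Fin (n-1)):ℕ)
          else ((⟨(i:ℕ)-1, _⟩ : Fin (n-1)):ℕ)+1) = (i:ℕ)
        rw [if_neg (show ¬ (i:ℕ)-1 < (μ:ℕ) by omega)]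
        show (i:ℕ)-1+1 = (i:ℕ)
        omega
      · rw [dif_neg h, dif_neg h']
        exact congrArg X (Fin.ext (show (μ:ℕ) = (i:ℕ) by omega))

lemma dot_insertAt {n : ℕ} (μ : Fin n) (c b : ZMod 2) (α x : Fin (n-1) → ZMod 2) :
    ∑ i, insertAt μ c α i * insertAt μ b x i = c * b + ∑ q, α q * x q := by
  rw [← Finset.add_sum_erase _ _ (Finset.mem_univ μ), insertAt_self, insertAt_self]
  congr 1
  refine (Finset.sum_bij' (i := fun q _ => extendIdx μ q)
    (j := fun i hi => ⟨if (i:ℕ) < (μ:ℕ) then (i:ℕ) else (i:ℕ) - 1, by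
      have hine : i ≠ μ := Finset.ne_of_mem_erase hi
      have h2 : (i:ℕ) ≠ (μ:ℕ) := fun hc => hine (Fin.ext hc)
      have := i.isLt; have := μ.isLt
      split <;> omega⟩) ?_ ?_ ?_ ?_ ?_).symm
  · intro q _
    apply Finset.mem_erase_of_ne_of_mem _ (Finset.mem_univ _)
    intro hc
    have hval : ((extendIdx μ q):ℕ) = (μ:ℕ) := congrArg Fin.val hc
    rw [extendIdx_val] at hval
    split at hval <;> omega
  · intro i _
    exact Finset.mem_univ _
  · intro q _
    apply Fin.ext
    show (if ((extendIdx μ q):ℕ) < (μ:ℕ) then ((extendIdx μ q):ℕ)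
      else ((extendIdx μ q):ℕ) - 1) = (q:ℕ)
    rw [extendIdx_val]
    split_ifs <;> omega
  · intro i hi
    have hine : i ≠ μ := Finset.ne_of_mem_erase hi
    have hne : (i:ℕ) ≠ (μ:ℕ) := fun hc => hine (Fin.ext hc)
    apply Fin.ext
    rw [extendIdx_val]
    show (if ((⟨if (i:ℕ) < (μ:ℕ) then (i:ℕ) else (i:ℕ) - 1, _⟩ : Fin (n-1)):ℕ) < (μ:ℕ)
      then ((⟨if (i:ℕ) < (μ:ℕ) then (i:ℕ) else (i:ℕ) - 1, _⟩ : Fin (n-1)):ℕ)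
      else ((⟨if (i:ℕ) < (μ:ℕ) then (i:ℕ) else (i:ℕ) - 1, _⟩ : Fin (n-1)):ℕ)+1) = (i:ℕ)
    show (if (if (i:ℕ) < (μ:ℕ) then (i:ℕ) else (i:ℕ) - 1) < (μ:ℕ)
      then (if (i:ℕ) < (μ:ℕ) then (i:ℕ) else (i:ℕ) - 1)
      else (if (i:ℕ) < (μ:ℕ) then (i:ℕ) else (i:ℕ) - 1)+1) = (i:ℕ)
    split_ifs <;> omega
  · intro q _
    rw [insertAt_extendIdx, insertAt_extendIdx]

lemma sum_zmod2 (g : ZMod 2 → ℤ) : (∑ b : ZMod 2, g b) = g 0 + g 1 := by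
  have : (Finset.univ : Finset (ZMod 2)) = {0, 1} := by decide
  rw [this, Finset.sum_insert (by decide), Finset.sum_singleton]

lemma walsh_insert {n : ℕ} (f : (Fin n → ZMod 2) → ZMod 2) (μ : Fin n) (c : ZMod 2)
    (α : Fin (n-1) → ZMod 2) :
    walsh f (insertAt μ c α) =
      walsh (fun x => f (insertAt μ 0 x)) α + chi c * walsh (fun x => f (insertAt μ 1 x)) α := by
  rw [walsh, ← Equiv.sum_comp (insertEquiv μ), Fintype.sum_prod_type]
  show (∑ b : ZMod 2, ∑ x : Fin (n-1) → ZMod 2,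
      chi (f (insertAt μ b x) + ∑ i, insertAt μ c α i * insertAt μ b x i)) = _
  rw [sum_zmod2]
  congr 1
  · rw [walsh]
    refine Finset.sum_congr rfl fun x _ => ?_
    rw [dot_insertAt, mul_zero, zero_add]
  · rw [walsh, Finset.mul_sum]
    refine Finset.sum_congr rfl fun x _ => ?_
    rw [dot_insertAt, mul_one, ← chi_add]
    congr 1
    ring

/-! ### The indirect sum construction -/

lemma indirect_core {n m : ℕ} (s t : ℕ) (hs : 0 < s) (ht : 0 < t)
    (f : (Fin n → ZMod 2) → ZMod 2) (g : (Fin m → ZMod 2) → ZMod 2)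
    (μ : Fin n) (ρ : Fin m)
    (Ff : ∀ ω, walsh f ω = 2 ^ s ∨ walsh f ω = -(2 ^ s))
    (Gg : ∀ ω, walsh g ω = 2 ^ t ∨ walsh g ω = -(2 ^ t))
    (h : (Fin (n-1) → ZMod 2) → (Fin (m-1) → ZMod 2) → ZMod 2)
    (hh : ∀ x y, h x y = f (insertAt μ 0 x) + g (insertAt ρ 0 y) +
      (f (insertAt μ 0 x) + f (insertAt μ 1 x)) * (g (insertAt ρ 0 y) + g (insertAt ρ 1 y)))
    (α : Fin (n-1) → ZMod 2) (β : Fin (m-1) → ZMod 2) :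
    walsh2 h α β = 2 ^ (s+t-1) ∨ walsh2 h α β = -(2 ^ (s+t-1)) := by
  have hz1 : ∀ z : ZMod 2, z ≠ 0 → z = 1 := by decide
  have hzc : ∀ a b c : ZMod 2, a + b + 1*(b+c) = a + c := by decide
  have hzd : ∀ a b : ZMod 2, a + b = 0 → b = a := by decide
  have hze : ∀ a b : ZMod 2, a + b = 1 → b = a + 1 := by decide
  set F0 : ℤ := walsh (fun x => f (insertAt μ 0 x)) α with hF0def
  set F1 : ℤ := walsh (fun x => f (insertAt μ 1 x)) α with hF1def
  set G0 : ℤ := walsh (fun y => g (insertAt ρ 0 y)) β with hG0def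
  set G1 : ℤ := walsh (fun y => g (insertAt ρ 1 y)) β with hG1def
  -- inner computation
  have inner : ∀ x : Fin (n-1) → ZMod 2,
      (∑ y : Fin (m-1) → ZMod 2, chi (h x y + (∑ i, α i * x i) + (∑ j, β j * y j))) =
        chi (f (insertAt μ 0 x) + ∑ i, α i * x i) *
          (if f (insertAt μ 0 x) + f (insertAt μ 1 x) = 0 then G0 else G1) := by
    intro x
    by_cases hd : f (insertAt μ 0 x) + f (insertAt μ 1 x) = 0
    · rw [if_pos hd]
      have hpt : ∀ y, chi (h x y + (∑ i, α i * x i) + (∑ j, β j * y j)) =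
          chi (f (insertAt μ 0 x) + ∑ i, α i * x i) *
            chi (g (insertAt ρ 0 y) + ∑ j, β j * y j) := by
        intro y
        rw [hh x y, hd, zero_mul, add_zero, ← chi_add]
        congr 1
        ring
      rw [Finset.sum_congr rfl fun y _ => hpt y, ← Finset.mul_sum, hG0def, walsh]
    · rw [if_neg hd]
      have hd1 : f (insertAt μ 0 x) + f (insertAt μ 1 x) = 1 := hz1 _ hd
      have hpt : ∀ y, chi (h x y + (∑ i, α i * x i) + (∑ j, β j * y j)) =
          chi (f (insertAt μ 0 x) + ∑ i, α i * x i) *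
            chi (g (insertAt ρ 1 y) + ∑ j, β j * y j) := by
        intro y
        rw [hh x y, hd1, ← chi_add]
        congr 1
        have := hzc (f (insertAt μ 0 x)) (g (insertAt ρ 0 y)) (g (insertAt ρ 1 y))
        rw [this]
        ring
      rw [Finset.sum_congr rfl fun y _ => hpt y, ← Finset.mul_sum, hG1def, walsh]
  have hWsum : walsh2 h α β = ∑ x : Fin (n-1) → ZMod 2,
      chi (f (insertAt μ 0 x) + ∑ i, α i * x i) *
        (if f (insertAt μ 0 x) + f (insertAt μ 1 x) = 0 then G0 else G1) := by
    rw [walsh2]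
    exact Finset.sum_congr rfl fun x _ => inner x
  -- key identity
  have key : 2 * walsh2 h α β = (G0 + G1) * F0 + (G0 - G1) * F1 := by
    rw [hWsum, Finset.mul_sum]
    have hpt : ∀ x : Fin (n-1) → ZMod 2,
        2 * (chi (f (insertAt μ 0 x) + ∑ i, α i * x i) *
          (if f (insertAt μ 0 x) + f (insertAt μ 1 x) = 0 then G0 else G1)) =
        (G0 + G1) * chi (f (insertAt μ 0 x) + ∑ i, α i * x i) +
        (G0 - G1) * chi (f (insertAt μ 1 x) + ∑ i, α i * x i) := by
      intro x
      by_cases hd : f (insertAt μ 0 x) + f (insertAt μ 1 x) = 0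
      · rw [if_pos hd, hzd _ _ hd]
        ring
      · have hd1 : f (insertAt μ 0 x) + f (insertAt μ 1 x) = 1 := hz1 _ hd
        rw [if_neg hd, hze _ _ hd1]
        have : chi (f (insertAt μ 0 x) + 1 + ∑ i, α i * x i) =
            chi (f (insertAt μ 0 x) + ∑ i, α i * x i) * chi 1 := by
          rw [← chi_add]
          congr 1
          ring
        rw [this]
        have h1 : chi 1 = -1 := rfl
        rw [h1]
        ring
    rw [Finset.sum_congr rfl fun x _ => hpt x, Finset.sum_add_distrib,
      ← Finset.mul_sum, ← Finset.mul_sum, hF0def, hF1def, walsh, walsh]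
  -- the four Walsh values
  have hchi0 : chi 0 = 1 := rfl
  have hchi1 : chi 1 = -1 := rfl
  obtain ⟨e1, he1, hA⟩ : ∃ e : ℤ, (e = 1 ∨ e = -1) ∧ F0 + F1 = e * 2 ^ s := by
    have hw := walsh_insert f μ 0 α
    rw [hchi0, one_mul, ← hF0def, ← hF1def] at hw
    rcases Ff (insertAt μ 0 α) with hc | hc
    · exact ⟨1, Or.inl rfl, by rw [← hw, hc]; ring⟩
    · exact ⟨-1, Or.inr rfl, by rw [← hw, hc]; ring⟩
  obtain ⟨e2, he2, hB⟩ : ∃ e : ℤ, (e = 1 ∨ e = -1) ∧ F0 - F1 = e * 2 ^ s := by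
    have hw := walsh_insert f μ 1 α
    rw [hchi1, ← hF0def, ← hF1def] at hw
    rcases Ff (insertAt μ 1 α) with hc | hc
    · exact ⟨1, Or.inl rfl, by rw [← hc, hw]; ring⟩
    · exact ⟨-1, Or.inr rfl, by rw [neg_one_mul, ← neg_eq_iff_eq_neg.mpr hc, hw]; ring⟩
  obtain ⟨d1, hd1, hC⟩ : ∃ e : ℤ, (e = 1 ∨ e = -1) ∧ G0 + G1 = e * 2 ^ t := by
    have hw := walsh_insert g ρ 0 β
    rw [hchi0, one_mul, ← hG0def, ← hG1def] at hw
    rcases Gg (insertAt ρ 0 β) with hc | hc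
    · exact ⟨1, Or.inl rfl, by rw [← hw, hc]; ring⟩
    · exact ⟨-1, Or.inr rfl, by rw [← hw, hc]; ring⟩
  obtain ⟨d2, hd2, hD⟩ : ∃ e : ℤ, (e = 1 ∨ e = -1) ∧ G0 - G1 = e * 2 ^ t := by
    have hw := walsh_insert g ρ 1 β
    rw [hchi1, ← hG0def, ← hG1def] at hw
    rcases Gg (insertAt ρ 1 β) with hc | hc
    · exact ⟨1, Or.inl rfl, by rw [← hc, hw]; ring⟩
    · exact ⟨-1, Or.inr rfl, by rw [neg_one_mul, ← neg_eq_iff_eq_neg.mpr hc, hw]; ring⟩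
  have k1 : 2 * F0 = (e1 + e2) * 2 ^ s := by linarith
  have k2 : 2 * F1 = (e1 - e2) * 2 ^ s := by linarith
  have h4 : 4 * walsh2 h α β = (d1*(e1+e2) + d2*(e1-e2)) * (2 ^ s * 2 ^ t) := by
    calc 4 * walsh2 h α β = 2*(2*walsh2 h α β) := by ring
      _ = 2*((G0+G1)*F0 + (G0-G1)*F1) := by rw [key]
      _ = (G0+G1)*(2*F0) + (G0-G1)*(2*F1) := by ring
      _ = (d1*2^t)*((e1+e2)*2^s) + (d2*2^t)*((e1-e2)*2^s) := by rw [hC, hD, k1, k2]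
      _ = (d1*(e1+e2) + d2*(e1-e2)) * (2 ^ s * 2 ^ t) := by ring
  have hpow : (2:ℤ) ^ s * 2 ^ t = 2 * 2 ^ (s+t-1) := by
    have h1 : (2:ℤ) ^ s * 2 ^ t = 2 ^ (s+t) := (pow_add 2 s t).symm
    have h2 : (2:ℤ) ^ (s+t) = 2 ^ ((s+t-1)+1) :=
      congrArg (fun k => (2:ℤ) ^ k) (Nat.sub_add_cancel (le_trans hs (Nat.le_add_right s t))).symm
    rw [h1, h2, pow_succ]
    ring
  rw [hpow] at h4
  rcases he1 with rfl | rfl <;> rcases he2 with rfl | rfl <;>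
    rcases hd1 with rfl | rfl <;> rcases hd2 with rfl | rfl <;>
    [skip; skip; skip; skip; skip; skip; skip; skip;
     skip; skip; skip; skip; skip; skip; skip; skip] <;>
    first
      | (left; linarith)
      | (right; linarith)


open scoped Classical in
/-- the modified indirect sum of two bent functions from class `D`
(Maiorana–McFarland functions plus the indicator of `E₁ × E₂`, resp. `Ξ₁ × Ξ₂`)
is bent in `n + m - 2 = 2s + 2t - 2` variables. -/
theorem bent_classD_indirect_sum (s t : ℕ) (hs : 0 < s) (ht : 0 < t)
    (φ : Fin s → (Fin s → ZMod 2) → ZMod 2)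
    (ψ : Fin t → (Fin t → ZMod 2) → ZMod 2)
    (hφ : Function.Bijective fun w : Fin s → ZMod 2 => fun i => φ i w)
    (hψ : Function.Bijective fun w : Fin t → ZMod 2 => fun j => ψ j w)
    (E₁ E₂ : Submodule (ZMod 2) (Fin s → ZMod 2))
    (Ξ₁ Ξ₂ : Submodule (ZMod 2) (Fin t → ZMod 2))
    (hφE : (fun w => fun i => φ i w) '' (E₂ : Set (Fin s → ZMod 2)) =
      {z : Fin s → ZMod 2 | ∀ e ∈ E₁, (∑ i, z i * e i) = 0})
    (hψΞ : (fun w => fun j => ψ j w) '' (Ξ₂ : Set (Fin t → ZMod 2)) =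
      {z : Fin t → ZMod 2 | ∀ e ∈ Ξ₁, (∑ j, z j * e j) = 0})
    (f : (Fin (2 * s) → ZMod 2) → ZMod 2)
    (hf : ∀ X : Fin (2 * s) → ZMod 2,
      f X = (∑ i : Fin s,
              φ i (fun q => X ⟨s + (q : ℕ), by have := q.isLt; omega⟩) *
                X ⟨(i : ℕ), by have := i.isLt; omega⟩) +
            (if (fun q : Fin s => X ⟨(q : ℕ), by have := q.isLt; omega⟩) ∈ E₁
              then 1 else 0) *
            (if (fun q : Fin s => X ⟨s + (q : ℕ), by have := q.isLt; omega⟩) ∈ E₂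
              then 1 else 0))
    (g : (Fin (2 * t) → ZMod 2) → ZMod 2)
    (hg : ∀ Y : Fin (2 * t) → ZMod 2,
      g Y = (∑ j : Fin t,
              ψ j (fun q => Y ⟨t + (q : ℕ), by have := q.isLt; omega⟩) *
                Y ⟨(j : ℕ), by have := j.isLt; omega⟩) +
            (if (fun q : Fin t => Y ⟨(q : ℕ), by have := q.isLt; omega⟩) ∈ Ξ₁
              then 1 else 0) *
            (if (fun q : Fin t => Y ⟨t + (q : ℕ), by have := q.isLt; omega⟩) ∈ Ξ₂
              then 1 else 0))
    (μ : Fin (2 * s)) (hμ : (μ : ℕ) < s) (ρ : Fin (2 * t)) (hρ : (ρ : ℕ) < t)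
    (h : (Fin (2 * s - 1) → ZMod 2) → (Fin (2 * t - 1) → ZMod 2) → ZMod 2)
    (hh : ∀ x y,
      h x y = f (insertAt μ 0 x) + g (insertAt ρ 0 y) +
        (f (insertAt μ 0 x) + f (insertAt μ 1 x)) *
          (g (insertAt ρ 0 y) + g (insertAt ρ 1 y))) :
    IsBent2 (2 * s - 1) (2 * t - 1) h := by
  have Ff := classD_walsh φ E₁ E₂ hφ hφE f hf
  have Gg := classD_walsh ψ Ξ₁ Ξ₂ hψ hψΞ g hg
  intro α β
  have hexp : (2 * s - 1 + (2 * t - 1)) / 2 = s + t - 1 := by omega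
  rw [hexp]
  exact indirect_core s t hs ht f g μ ρ Ff Gg h hh α β
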